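/- In cylindrical coordinates (r,θ,z) on ℝ³, let τ = 1 + (r−1)/(L−1) for r ∈ [1,L] and k = L−1. Given a vector field v̄ = v̄_τ e_τ + v̄_θ e_θ + v̄_z e_z on {(τ,θ,z) : 1 < τ < 2, 0 < z < 1}, define v_r = (kτ/r)v̄_τ(τ,θ,z), v_θ = v̄_θ(τ,θ,z), v_z = (τ/r)v̄_z(τ,θ,z). Then div v = (τ/r)·div v̄. -/

import Mathlib

/-!
The θ-terms of the two divergences agree, and the z-term of `div v` is `τ/r` times that of
`div v̄` because the factor `τ/r` does not depend on `z`. In the radial term, the product and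
chain rules give `∂_r v_r = (k τ'/r - kτ/r²) v̄_τ + (kτ/r) τ' ∂_τ v̄_τ`; since `k τ' = 1`, the part
`-kτ/r² v̄_τ` cancels `r⁻¹ v_r`, leaving `(τ/r)(τ⁻¹ v̄_τ + ∂_τ v̄_τ)`.
-/

noncomputable def cdiv (wr wθ wz : ℝ × ℝ × ℝ → ℝ) (r θ z : ℝ) : ℝ :=
  wr (r, θ, z) / r + deriv (fun s => wr (s, θ, z)) r
    + (1 / r) * deriv (fun s => wθ (r, s, z)) θ
    + deriv (fun s => wz (r, θ, s)) z

theorem cdiv_radial_reparam {τ : ℝ → ℝ} {τ' k r : ℝ} (hτ : HasDerivAt τ τ' r) (hk : k * τ' = 1)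
    (hr : r ≠ 0) (hτr : τ r ≠ 0) (vτ vθ vz : ℝ × ℝ × ℝ → ℝ) (θ z : ℝ)
    (hvτ : DifferentiableAt ℝ (fun s => vτ (s, θ, z)) (τ r)) :
    cdiv (fun p => (k * τ p.1 / p.1) * vτ (τ p.1, p.2.1, p.2.2))
        (fun p => vθ (τ p.1, p.2.1, p.2.2))
        (fun p => (τ p.1 / p.1) * vz (τ p.1, p.2.1, p.2.2)) r θ z
      = (τ r / r) * cdiv vτ vθ vz (τ r) θ z := by
  have hradial : HasDerivAt (fun s => k * τ s / s * vτ (τ s, θ, z))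
      ((k * τ' * r - k * τ r * 1) / r ^ 2 * vτ (τ r, θ, z)
        + k * τ r / r * (deriv (fun s => vτ (s, θ, z)) (τ r) * τ')) r :=
    ((hτ.const_mul k).div (hasDerivAt_id r) hr).mul (hvτ.hasDerivAt.comp r hτ)
  simp only [cdiv, hradial.deriv, deriv_const_mul_field]
  rw [hk]
  field_simp
  linear_combination τ r * r * deriv (fun s => vτ (s, θ, z)) (τ r) * hk

theorem stmt14_general (L : ℝ)
    (k : ℝ) (hk : k = L - 1)
    (τ : ℝ → ℝ) (hτ : τ = fun s => 1 + (s - 1) / (L - 1))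
    (vτ vθ vz : ℝ × ℝ × ℝ → ℝ)
    (h1 : ContDiff ℝ 1 vτ)
    (r θ z : ℝ) (hr : r ∈ Set.Ioo (1 : ℝ) L) :
    cdiv (fun p => (k * τ p.1 / p.1) * vτ (τ p.1, p.2.1, p.2.2))
        (fun p => vθ (τ p.1, p.2.1, p.2.2))
        (fun p => (τ p.1 / p.1) * vz (τ p.1, p.2.1, p.2.2)) r θ z
      = (τ r / r) * cdiv vτ vθ vz (τ r) θ z := by
  obtain ⟨hr1, hrL⟩ := hr
  have hL : L - 1 ≠ 0 := by linarith
  subst hk hτ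
  have hτ_deriv : HasDerivAt (fun s => 1 + (s - 1) / (L - 1)) (1 / (L - 1)) r := by
    simpa using (((hasDerivAt_id r).sub_const 1).div_const (L - 1)).const_add 1
  have hτr : 1 + (r - 1) / (L - 1) ≠ 0 := by
    have : 0 < (r - 1) / (L - 1) := div_pos (by linarith) (by linarith)
    linarith
  refine cdiv_radial_reparam hτ_deriv (mul_one_div_cancel hL) (by linarith) hτr vτ vθ vz θ z ?_
  have := h1.differentiable one_ne_zero
  fun_prop

/-- with τ(r) = 1 + (r−1)/(L−1), k = L−1, and v defined from v̄ by
v_r = (kτ/r)v̄_τ, v_θ = v̄_θ, v_z = (τ/r)v̄_z, one has div v = (τ/r)·div v̄. -/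
theorem stmt14 (L : ℝ) (hL : 1 < L)
    (k : ℝ) (hk : k = L - 1)
    (τ : ℝ → ℝ) (hτ : τ = fun s => 1 + (s - 1) / (L - 1))
    (vτ vθ vz : ℝ × ℝ × ℝ → ℝ)
    (h1 : ContDiff ℝ 1 vτ) (h2 : ContDiff ℝ 1 vθ) (h3 : ContDiff ℝ 1 vz)
    (r θ z : ℝ) (hr : r ∈ Set.Ioo (1 : ℝ) L) (hz : z ∈ Set.Ioo (0 : ℝ) 1) :
    cdiv (fun p => (k * τ p.1 / p.1) * vτ (τ p.1, p.2.1, p.2.2))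
        (fun p => vθ (τ p.1, p.2.1, p.2.2))
        (fun p => (τ p.1 / p.1) * vz (τ p.1, p.2.1, p.2.2)) r θ z
      = (τ r / r) * cdiv vτ vθ vz (τ r) θ z :=
  stmt14_general L k hk τ hτ vτ vθ vz h1 r θ z hr
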